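/- Let C ⊆ 𝔽_q^m be a linear code of dimension n, and let S = {supp(c) : c ∈ C} ⊆ 2^{[m]} be the associated set system viewed as a code in {0,1}^m. Then CL(S) = n. -/

import Mathlib

/-!
Lifting a chain `(a, c)` to codewords `x i` with support `c i`, the matrix `(x i (a j))` is lower
triangular with nonzero diagonal, so the `x i` are linearly independent and the chain has length at
most `n`. Conversely, take a codeword `x` and a coordinate `p` with `x p ≠ 0`: the codewords
vanishing at `p` form a subcode of dimension `n - 1`, and appending `(p, supp x)` to a chain of it
gives a chain of length `n`.
-/

namespace Paper

/-- A chain of length `ℓ` in a code `C ⊆ {0,1}^m`. -/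
def HasChain {m : ℕ} (C : Set (Fin m → Bool)) (ℓ : ℕ) : Prop :=
  ∃ (a : Fin ℓ → Fin m) (c : Fin ℓ → (Fin m → Bool)),
    Function.Injective a ∧ Function.Injective c ∧ (∀ i, c i ∈ C) ∧
    (∀ i, c i (a i) = true) ∧ (∀ i j : Fin ℓ, i < j → c i (a j) = false)

/-- The chain length of a code. -/
noncomputable def CL {m : ℕ} (C : Set (Fin m → Bool)) : ℕ := sSup {ℓ | HasChain C ℓ}

/-- The support of a code. -/
def Supp {m : ℕ} (C : Set (Fin m → Bool)) : Set (Fin m) := {i | ∃ c ∈ C, c i = true}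

/-- Hamming weight. -/
def wt {m : ℕ} (c : Fin m → Bool) : ℕ := (Finset.univ.filter fun i => c i = true).card

open Classical in
/-- Zero out the coordinates outside `S`. -/
noncomputable def mask {m : ℕ} (S : Set (Fin m)) (c : Fin m → Bool) : Fin m → Bool :=
  fun i => if i ∈ S then c i else false

/-- Restriction of a code to a coordinate set `S`. -/
noncomputable def restrict {m : ℕ} (C : Set (Fin m → Bool)) (S : Set (Fin m)) :
    Set (Fin m → Bool) := mask S '' C

/-- Non-redundancy of a code. -/
noncomputable def NRD {m : ℕ} (C : Set (Fin m → Bool)) : ℕ :=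
  sSup {k | ∃ S : Finset (Fin m), S.card = k ∧
    ∀ j ∈ S, ∃ c ∈ C, c j = true ∧ ∀ i ∈ S, i ≠ j → c i = false}

/-- The density `Φ(C)` of a finite code. -/
noncomputable def density {m : ℕ} (C : Finset (Fin m → Bool)) : ℝ :=
  sInf {x : ℝ | ∃ C' : Finset (Fin m → Bool), C' ⊆ C ∧ C'.Nonempty ∧
    1 ≤ CL (↑C' : Set (Fin m → Bool)) ∧
    x = (Supp (↑C' : Set (Fin m → Bool))).ncard / (CL (↑C' : Set (Fin m → Bool)) : ℝ)}

section Triangular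

variable {F ι κ : Type*} [Field F] [Fintype ι] [LinearOrder ι]

theorem linearIndependent_of_triangular (x : ι → κ → F) (a : ι → κ)
    (hdiag : ∀ i, x i (a i) ≠ 0) (hlt : ∀ i j, i < j → x i (a j) = 0) :
    LinearIndependent F x := by
  let M : Matrix ι ι F := Matrix.of fun i j => x i (a j)
  have hdet : M.det ≠ 0 := by
    rw [Matrix.det_of_isLowerTriangular M fun i j hij => hlt i j hij]
    exact Finset.prod_ne_zero_iff.mpr fun i _ => hdiag i
  exact LinearIndependent.of_comp (LinearMap.funLeft F F a)
    (Matrix.linearIndependent_rows_of_det_ne_zero hdet)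

end Triangular

section Chain

variable {m ℓ : ℕ} {D : Set (Fin m → Bool)}

theorem hasChain_iff : HasChain D ℓ ↔ ∃ (a : Fin ℓ → Fin m) (c : Fin ℓ → Fin m → Bool),
    (∀ i, c i ∈ D) ∧ (∀ i, c i (a i) = true) ∧ (∀ i j, i < j → c i (a j) = false) := by
  refine ⟨fun ⟨a, c, _, _, hD, hdiag, hlt⟩ => ⟨a, c, hD, hdiag, hlt⟩, ?_⟩
  rintro ⟨a, c, hD, hdiag, hlt⟩
  -- for `i < j`, the coordinate `a j` separates `a i` from `a j` and `c i` from `c j`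
  refine ⟨a, c, .of_lt_imp_ne fun i j hij h => ?_, .of_lt_imp_ne fun i j hij h => ?_, hD, hdiag,
    hlt⟩
  · simpa [← h, hdiag] using hlt i j hij
  · simpa [h, hdiag] using hlt i j hij

theorem HasChain.snoc {D' : Set (Fin m → Bool)} (h : HasChain D' ℓ) (hD' : D' ⊆ D) {p : Fin m}
    (hvan : ∀ v ∈ D', v p = false) {w : Fin m → Bool} (hw : w ∈ D) (hwp : w p = true) :
    HasChain D (ℓ + 1) := by
  obtain ⟨a, c, hD, hdiag, hlt⟩ := hasChain_iff.mp h
  refine hasChain_iff.mpr ⟨Fin.snoc a p, Fin.snoc c w, fun i => ?_, fun i => ?_, fun i j hij => ?_⟩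
  · cases i using Fin.lastCases <;> simp [hw, hD' (hD _)]
  · cases i using Fin.lastCases <;> simp [hwp, hdiag]
  · cases j using Fin.lastCases with
    | last =>
      cases i using Fin.lastCases with
      | last => exact absurd hij (lt_irrefl _)
      | cast i => simpa using hvan _ (hD i)
    | cast j =>
      cases i using Fin.lastCases with
      | last => exact absurd hij (not_lt.mpr (Fin.le_last _))
      | cast i => simpa using hlt i j (by simpa using hij)

end Chain

section LinearCode

variable {F : Type*} [Field F] [DecidableEq F] {m : ℕ}

def supportIndicator (c : Fin m → F) : Fin m → Bool := fun i => decide (c i ≠ 0)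

@[simp]
theorem supportIndicator_apply_eq_true {c : Fin m → F} {i : Fin m} :
    supportIndicator c i = true ↔ c i ≠ 0 := by
  simp [supportIndicator]

@[simp]
theorem supportIndicator_apply_eq_false {c : Fin m → F} {i : Fin m} :
    supportIndicator c i = false ↔ c i = 0 := by
  simp [supportIndicator]

theorem HasChain.le_finrank {C : Submodule F (Fin m → F)} {ℓ : ℕ}
    (h : HasChain (supportIndicator '' (C : Set (Fin m → F))) ℓ) : ℓ ≤ Module.finrank F C := by
  obtain ⟨a, c, hD, hdiag, hlt⟩ := hasChain_iff.mp h
  choose x hxC hx using hD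
  have hli : LinearIndependent F x :=
    linearIndependent_of_triangular x a
      (fun i => supportIndicator_apply_eq_true.mp ((hx i).symm ▸ hdiag i))
      (fun i j hij => supportIndicator_apply_eq_false.mp ((hx i).symm ▸ hlt i j hij))
  calc ℓ = Module.finrank F (Submodule.span F (Set.range x)) := by
        rw [finrank_span_eq_card hli, Fintype.card_fin]
    _ ≤ Module.finrank F C :=
        Submodule.finrank_mono (Submodule.span_le.mpr (Set.range_subset_iff.mpr hxC))

theorem hasChain_finrank (C : Submodule F (Fin m → F)) :
    HasChain (supportIndicator '' (C : Set (Fin m → F))) (Module.finrank F C) := by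
  induction hn : Module.finrank F C generalizing C with
  | zero => exact hasChain_iff.mpr ⟨Fin.elim0, Fin.elim0, nofun, nofun, nofun⟩
  | succ n ih =>
    have hC : C ≠ ⊥ := by
      rintro rfl
      simp at hn
    obtain ⟨x, hxC, hx0⟩ := Submodule.exists_mem_ne_zero_of_ne_bot hC
    obtain ⟨p, hp⟩ := Function.ne_iff.mp hx0
    let f : Module.Dual F C := (LinearMap.proj p).comp C.subtype
    have hf : f ≠ 0 := fun h => hp (LinearMap.congr_fun h ⟨x, hxC⟩)
    let C' := (LinearMap.ker f).map C.subtype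
    have hC' : Module.finrank F C' = n := by
      have := Module.Dual.finrank_ker_add_one_of_ne_zero hf
      rw [Submodule.finrank_map_subtype_eq]
      omega
    refine (ih C' hC').snoc (Set.image_mono (Submodule.map_subtype_le _ _)) ?_
      (Set.mem_image_of_mem _ hxC) (supportIndicator_apply_eq_true.mpr hp)
    rintro _ ⟨_, ⟨y, hy, rfl⟩, rfl⟩
    simpa [f] using hy

end LinearCode

theorem cl_linear_code_eq_dim_general (F : Type*) [Field F] [DecidableEq F]
    (m n : ℕ) (C : Submodule F (Fin m → F)) (h : Module.finrank F C = n) :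
    CL ((fun c : Fin m → F => fun i => decide (c i ≠ 0)) '' (C : Set (Fin m → F))) = n := by
  subst h
  exact IsGreatest.csSup_eq ⟨hasChain_finrank (F := F) C, fun _ => HasChain.le_finrank⟩

/-- for a linear code `C ⊆ 𝔽_q^m` of dimension `n`, the chain length of
the set system of supports of codewords equals `n`. -/
theorem cl_linear_code_eq_dim (F : Type*) [Field F] [Fintype F] [DecidableEq F]
    (m n : ℕ) (C : Submodule F (Fin m → F)) (h : Module.finrank F C = n) :
    CL ((fun c : Fin m → F => fun i => decide (c i ≠ 0)) '' (C : Set (Fin m → F))) = n :=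
  cl_linear_code_eq_dim_general F m n C h

end Paper
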